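/- If (x_i)_{i=1}^m is a λ-wide-(s) sequence in a Banach space, then (xᵢ/‖xᵢ‖)_{i=1}^m is an ℓ₁⁺-sequence with constant max(2λ, λ²). -/

import Mathlib

variable {X : Type*} [NormedAddCommGroup X] [NormedSpace ℝ X]

/-- Partial sum `∑_{i < p} aᵢ xᵢ` of a finite sequence. -/
def prefSum {m : ℕ} (x : Fin m → X) (a : Fin m → ℝ) (p : ℕ) : X :=
  ∑ i : Fin m, if (i : ℕ) < p then a i • x i else 0

/-- `(x_i)_{i=1}^m` is `K`-basic: the basis constant is at most `K`. -/
def IsFinBasic {m : ℕ} (K : ℝ) (x : Fin m → X) : Prop :=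
  ∀ (a : Fin m → ℝ) (p q : ℕ), p ≤ q → q ≤ m →
    ‖prefSum x a p‖ ≤ K * ‖prefSum x a q‖

/-- `(x_i)_{i=1}^m` is normalized: each vector has norm one. -/
def IsNormalizedFin {m : ℕ} (x : Fin m → X) : Prop := ∀ i, ‖x i‖ = 1

/-- An `ℓ₁⁺-K`-sequence: normalized, `K`-basic, and
`(1/K) ∑ aᵢ ≤ ‖∑ aᵢ xᵢ‖` for nonnegative scalars. -/
def IsL1Plus {m : ℕ} (K : ℝ) (x : Fin m → X) : Prop :=
  IsNormalizedFin x ∧ IsFinBasic K x ∧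
    ∀ a : Fin m → ℝ, (∀ i, 0 ≤ a i) → (1 / K) * ∑ i, a i ≤ ‖∑ i, a i • x i‖

/-- An `ℓ∞⁺-K`-sequence: normalized, `K`-basic, and there are coefficients
`aᵢ ∈ [1/K, 1]` with `‖∑ aᵢ xᵢ‖ ≤ K`. -/
def IsLInfPlus {m : ℕ} (K : ℝ) (x : Fin m → X) : Prop :=
  IsNormalizedFin x ∧ IsFinBasic K x ∧
    ∃ a : Fin m → ℝ, (∀ i, 1 / K ≤ a i ∧ a i ≤ 1) ∧ ‖∑ i, a i • x i‖ ≤ K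

/-- A `λ`-wide-(s) sequence: `2λ`-basic, `‖xᵢ‖ ≤ λ`, and
`sup_k |∑_{i≥k} aᵢ| ≤ λ ‖∑ aᵢ xᵢ‖` for all scalars. -/
def IsWideS {m : ℕ} (l : ℝ) (x : Fin m → X) : Prop :=
  IsFinBasic (2 * l) x ∧ (∀ i, ‖x i‖ ≤ l) ∧
    ∀ (a : Fin m → ℝ) (k : ℕ),
      |∑ i : Fin m, if k ≤ (i : ℕ) then a i else 0| ≤ l * ‖∑ i, a i • x i‖

/-- A `λ`-wide-(c) sequence: `λ`-basic, `1/λ ≤ ‖xᵢ‖ ≤ 1`, and `‖∑ xᵢ‖ ≤ λ`. -/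
def IsWideC {m : ℕ} (l : ℝ) (x : Fin m → X) : Prop :=
  IsFinBasic l x ∧ (∀ i, 1 / l ≤ ‖x i‖ ∧ ‖x i‖ ≤ 1) ∧ ‖∑ i, x i‖ ≤ l

/-!
Taking `k = 0` in the defining inequality of a `λ`-wide-(s) sequence gives
`|∑ bᵢ| ≤ λ ‖∑ bᵢ xᵢ‖`. Applied to a unit vector of coefficients this yields `1 ≤ λ ‖xᵢ‖`, so the
normalization is defined; applied to `bᵢ = aᵢ / ‖xᵢ‖` with `aᵢ ≥ 0`, together with `‖xᵢ‖ ≤ λ`, it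
yields `∑ aᵢ ≤ λ ∑ bᵢ ≤ λ² ‖∑ aᵢ xᵢ/‖xᵢ‖‖`. Rescaling the vectors does not change the basis constant.
-/

section Basic

variable {m : ℕ} {K : ℝ} {x : Fin m → X}

theorem prefSum_smul (c a : Fin m → ℝ) (p : ℕ) :
    prefSum (fun i => c i • x i) a p = prefSum x (fun i => a i * c i) p := by
  simp only [prefSum, smul_smul]

theorem IsFinBasic.mono {K' : ℝ} (hx : IsFinBasic K x) (hK : K ≤ K') : IsFinBasic K' x :=
  fun a p q hpq hqm =>
    (hx a p q hpq hqm).trans (mul_le_mul_of_nonneg_right hK (norm_nonneg _))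

theorem IsFinBasic.smul (hx : IsFinBasic K x) (c : Fin m → ℝ) :
    IsFinBasic K (fun i => c i • x i) := by
  intro a p q hpq hqm
  simpa only [prefSum_smul] using hx (fun i => a i * c i) p q hpq hqm

theorem isNormalizedFin_inv_norm_smul (hx : ∀ i, x i ≠ 0) :
    IsNormalizedFin (fun i => ‖x i‖⁻¹ • x i) :=
  fun i => norm_smul_inv_norm (𝕜 := ℝ) (hx i)

end Basic

namespace IsWideS

variable {m : ℕ} {l : ℝ} {x : Fin m → X}

theorem abs_sum_le (hx : IsWideS l x) (a : Fin m → ℝ) :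
    |∑ i, a i| ≤ l * ‖∑ i, a i • x i‖ := by
  simpa only [zero_le, if_true] using hx.2.2 a 0

theorem one_le_mul_norm (hx : IsWideS l x) (i : Fin m) : 1 ≤ l * ‖x i‖ := by
  simpa [ite_smul] using hx.abs_sum_le (fun j => if j = i then 1 else 0)

theorem ne_zero (hx : IsWideS l x) (i : Fin m) : x i ≠ 0 :=
  fun h => absurd (hx.one_le_mul_norm i) (by simp [h])

theorem sum_le_sq_mul_norm_inv_norm_smul (hx : IsWideS l x) (hl : 0 ≤ l) {a : Fin m → ℝ}
    (ha : ∀ i, 0 ≤ a i) : ∑ i, a i ≤ l ^ 2 * ‖∑ i, a i • ‖x i‖⁻¹ • x i‖ := by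
  set b : Fin m → ℝ := fun i => a i * ‖x i‖⁻¹
  have hb : ∀ i, 0 ≤ b i := fun i => mul_nonneg (ha i) (inv_nonneg.2 (norm_nonneg _))
  have hab : ∀ i, a i ≤ l * b i := fun i => by
    calc a i = b i * ‖x i‖ :=
          (inv_mul_cancel_right₀ (norm_ne_zero_iff.2 (hx.ne_zero i)) (a i)).symm
      _ ≤ b i * l := mul_le_mul_of_nonneg_left (hx.2.1 i) (hb i)
      _ = l * b i := mul_comm _ _
  have hsum : ∑ i, b i ≤ l * ‖∑ i, b i • x i‖ := by
    simpa only [abs_of_nonneg (Finset.sum_nonneg fun i _ => hb i)] using hx.abs_sum_le b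
  calc ∑ i, a i ≤ l * ∑ i, b i := by
        rw [Finset.mul_sum]
        exact Finset.sum_le_sum fun i _ => hab i
    _ ≤ l * (l * ‖∑ i, b i • x i‖) := mul_le_mul_of_nonneg_left hsum hl
    _ = l ^ 2 * ‖∑ i, a i • ‖x i‖⁻¹ • x i‖ := by
        simp only [b, smul_smul]
        ring

end IsWideS

/-- If `(x_i)` is a `λ`-wide-(s) sequence, then the normalizations `xᵢ/‖xᵢ‖` form
an `ℓ₁⁺`-sequence with constant `max (2λ) (λ²)`. -/
theorem l1Plus_of_wideS {m : ℕ} (l : ℝ) (hl : 1 ≤ l) (x : Fin m → X)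
    (hx : IsWideS l x) :
    IsL1Plus (max (2 * l) (l ^ 2)) (fun i => ‖x i‖⁻¹ • x i) := by
  have hl2 : 0 < l ^ 2 := by positivity
  have hK : l ^ 2 ≤ max (2 * l) (l ^ 2) := le_max_right _ _
  refine ⟨isNormalizedFin_inv_norm_smul hx.ne_zero,
    (hx.1.mono (le_max_left _ _)).smul _, fun a ha => ?_⟩
  have hsum := hx.sum_le_sq_mul_norm_inv_norm_smul (by linarith) ha
  calc 1 / max (2 * l) (l ^ 2) * ∑ i, a i ≤ 1 / l ^ 2 * ∑ i, a i :=
        mul_le_mul_of_nonneg_right (one_div_le_one_div_of_le hl2 hK)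
          (Finset.sum_nonneg fun i _ => ha i)
    _ ≤ _ := by
        rw [one_div_mul_eq_div, div_le_iff₀ hl2, mul_comm]
        exact hsum
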